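/- arXiv:2004.14902 — 4 statements merged into one kernel-verified Lean document; each statement's English description precedes it below -/
import Mathlib

section
/- Let k ≥ 0 and let a : Fin (2k+1) → ℝ/ℤ be injective. If σ and τ are permutations of Fin (2k+1) such that both a ∘ σ and a ∘ τ are in cyclic order, then sign σ = sign τ (as elements of {±1}). -/
/-!
Write `σ = τ * π`. Both `a ∘ τ` and `(a ∘ τ) ∘ π` are in cyclic order, so `π` preserves the
cyclic order of the indices in `Fin (2k+1)`. Then `i ↦ π i - π 0` is strictly monotone, hence the
identity, so `π` is the rotation `i ↦ i + π 0`: a power of a `(2k+1)`-cycle, hence even.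
-/

noncomputable section

instance : Fact ((0:ℝ) < 1) := ⟨one_pos⟩

/-- The circle `ℝ/ℤ`. -/
abbrev S1 := AddCircle (1 : ℝ)

/-- A tuple of points on the circle is in cyclic order if every increasing triple of
indices gives points in strict circular betweenness. -/
def InCyclicOrder {m : ℕ} (b : Fin m → S1) : Prop :=
  ∀ i j l : Fin m, i < j → j < l → sbtw (b i) (b j) (b l)

section LinearOrderCircular

-- On the index type, `sbtw x y z` is the cyclic order obtained by looping the linear order around.
attribute [local instance] LinearOrder.toCircularOrder

variable {ι α : Type*} [LinearOrder ι] [CircularOrder α] {b : ι → α}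

theorem sbtw_apply_of_sbtw (hb : ∀ i j l, i < j → j < l → sbtw (b i) (b j) (b l))
    {x y z : ι} (h : sbtw x y z) : sbtw (b x) (b y) (b z) := by
  rcases sbtw_iff.1 h with ⟨hxy, hyz⟩ | ⟨hyz, hzx⟩ | ⟨hzx, hxy⟩
  · exact hb x y z hxy hyz
  · exact sbtw_cyclic_right (hb y z x hyz hzx)
  · exact sbtw_cyclic_left (hb z x y hzx hxy)

theorem sbtw_apply_iff (hb : ∀ i j l, i < j → j < l → sbtw (b i) (b j) (b l))
    {x y z : ι} : sbtw (b x) (b y) (b z) ↔ sbtw x y z := by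
  refine ⟨fun h => ?_, sbtw_apply_of_sbtw hb⟩
  by_contra hxyz
  have hxy : x ≠ y := by rintro rfl; exact sbtw_irrefl_left h
  have hyz : y ≠ z := by rintro rfl; exact sbtw_irrefl_right h
  have hzx : z ≠ x := by rintro rfl; exact sbtw_irrefl_left_right h
  have hzyx : sbtw z y x := sbtw_iff_not_btw.2 fun hxyz' => by
    rcases (btw_iff_not_sbtw.2 hxyz).antisymm hxyz' with h | h | h
    exacts [hyz h.symm, hxy h.symm, hzx h.symm]
  exact sbtw_asymm h (sbtw_apply_of_sbtw hb hzyx)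

theorem Fin.val_sub_lt_val_sub_of_sbtw {m : ℕ} {c x y : Fin m} (h : sbtw c x y) :
    (x - c).val < (y - c).val := by
  have hsub (z : Fin m) : (z - c).val = if c ≤ z then z.val - c.val else m + z.val - c.val := by
    split_ifs with hz
    · exact Fin.sub_val_of_le hz
    · exact Fin.coe_sub_iff_lt.2 (not_le.1 hz)
  have := x.isLt
  have := y.isLt
  rw [hsub, hsub]
  rcases sbtw_iff.1 h with ⟨hcx, hxy⟩ | ⟨hxy, hyc⟩ | ⟨hyc, hcx⟩
  · rw [if_pos hcx.le, if_pos (hcx.trans hxy).le]; omega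
  · rw [if_neg (not_le.2 (hxy.trans hyc)), if_neg (not_le.2 hyc)]; omega
  · rw [if_pos hcx.le, if_neg (not_le.2 hyc)]; omega

theorem Fin.eq_addRight_of_sbtw {n : ℕ} (π : Equiv.Perm (Fin (n + 1)))
    (hπ : ∀ i j l, i < j → j < l → sbtw (π i) (π j) (π l)) :
    π = Equiv.addRight (π 0) := by
  have hmono : StrictMono fun i => π i - π 0 := by
    intro i j hij
    rcases eq_or_ne i 0 with rfl | hi
    · simpa [Fin.pos_iff_ne_zero, sub_eq_zero] using π.injective.ne hij.ne'
    · exact Fin.lt_def.2 <| Fin.val_sub_lt_val_sub_of_sbtw <|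
        hπ 0 i j (Fin.pos_iff_ne_zero.2 hi) hij
  ext i
  exact congrArg Fin.val (sub_eq_iff_eq_add.1 hmono.apply_eq)

end LinearOrderCircular

theorem finRotate_eq_addRight_one (n : ℕ) : finRotate (n + 1) = Equiv.addRight 1 :=
  Equiv.ext finRotate_apply

open Fin.NatCast in
theorem Fin.addRight_eq_finRotate_pow {n : ℕ} (c : Fin (n + 1)) :
    Equiv.addRight c = finRotate (n + 1) ^ c.val := by
  rw [finRotate_eq_addRight_one, Equiv.nsmul_addRight, nsmul_one, Fin.cast_val_eq_self]

theorem Fin.sign_addRight_of_odd {k : ℕ} (c : Fin (2 * k + 1)) :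
    Equiv.Perm.sign (Equiv.addRight c) = 1 := by
  rw [Fin.addRight_eq_finRotate_pow, map_pow, sign_finRotate, Nat.add_sub_cancel, pow_mul,
    neg_one_sq, one_pow, one_pow]

theorem stmt1_general (k : ℕ) (a : Fin (2 * k + 1) → S1)
    (σ τ : Equiv.Perm (Fin (2 * k + 1)))
    (hσ : InCyclicOrder (a ∘ σ)) (hτ : InCyclicOrder (a ∘ τ)) :
    Equiv.Perm.sign σ = Equiv.Perm.sign τ := by
  set π := τ⁻¹ * σ
  have hπ : π = Equiv.addRight (π 0) := by
    refine Fin.eq_addRight_of_sbtw π fun i j l hij hjl => (sbtw_apply_iff hτ).1 ?_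
    simpa [π] using hσ i j l hij hjl
  have hστ : σ = τ * π := by simp [π]
  rw [hστ, map_mul, hπ, Fin.sign_addRight_of_odd, mul_one]

theorem stmt1 (k : ℕ) (a : Fin (2 * k + 1) → S1) (ha : Function.Injective a)
    (σ τ : Equiv.Perm (Fin (2 * k + 1)))
    (hσ : InCyclicOrder (a ∘ σ)) (hτ : InCyclicOrder (a ∘ τ)) :
    Equiv.Perm.sign σ = Equiv.Perm.sign τ :=
  stmt1_general k a σ τ hσ hτ
end
end

section
/- Let k ≥ 0 and define, for an injective tuple a : Fin (2k+1) → ℝ/ℤ, sgn(a) := sign σ for any (equivalently, every) permutation σ with a ∘ σ in cyclic order. Then for every permutation τ of Fin (2k+1), sgn(a ∘ τ) = (sign τ) · sgn(a). -/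
noncomputable section
open Classical

/-- The cyclic sign of a tuple of points on the circle: the sign of any permutation
rearranging the tuple into cyclic order (well defined for injective tuples of odd
length). -/

noncomputable def cycSgn {m : ℕ} (a : Fin m → S1) : ℤ :=
  if h : ∃ σ : Equiv.Perm (Fin m), InCyclicOrder (a ∘ σ) then
    (Equiv.Perm.sign h.choose : ℤ)
  else 1

/-!
Lifting the points to `[0, 1)` and sorting the lifts puts any injective tuple in cyclic order.
If `b` and `b ∘ π` are both in cyclic order, then `π` preserves the cyclic order of the indices
`Fin m`; since nothing lies strictly between `i` and `i + 1`, such a `π` commutes with `· + 1`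
and is therefore a rotation `i ↦ π 0 + i`, a power of the `m`-cycle `finRotate m`, which is even
when `m` is odd. Hence the sign of a sorting permutation does not depend on the choice, and
`a ∘ τ` is sorted by `τ⁻¹ * σ` whenever `a` is sorted by `σ`.
-/

section CircularOrder

variable {α : Type*} [CircularOrder α] {a b c : α}

theorem sbtw_or_sbtw_of_ne (hab : a ≠ b) (hbc : b ≠ c) (hca : c ≠ a) :
    sbtw a b c ∨ sbtw c b a := by
  rw [sbtw_iff_not_btw, sbtw_iff_not_btw]
  by_contra! h
  rcases h.2.antisymm h.1 with h | h | h
  exacts [hab h, hbc h, hca h]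

end CircularOrder

theorem AddCircle.sbtw_coe_of_lt {p : ℝ} [Fact (0 < p)] {x y z : ℝ} (hxy : x < y) (hyz : y < z)
    (hzx : z < x + p) : sbtw (x : AddCircle p) (y : AddCircle p) (z : AddCircle p) := by
  refine sbtw_of_btw_not_btw ?_ ?_ <;> rw [QuotientAddGroup.btw_coe_iff]
  · rw [(toIcoMod_eq_self _).2 ⟨hxy.le, by linarith⟩,
      (toIocMod_eq_self _).2 ⟨by linarith, hzx.le⟩]
    exact hyz.le
  · -- seen from `z`, the representatives of `y` and `x` are `y + p` and `x + p`
    rw [← toIcoMod_add_right, ← toIocMod_add_right,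
      (toIcoMod_eq_self _).2 ⟨by linarith, by linarith⟩,
      (toIocMod_eq_self _).2 ⟨by linarith, by linarith⟩]
    intro h
    linarith

theorem exists_perm_inCyclicOrder {m : ℕ} {a : Fin m → S1} (ha : Function.Injective a) :
    ∃ σ : Equiv.Perm (Fin m), InCyclicOrder (a ∘ σ) := by
  set f : Fin m → ℝ := fun i => AddCircle.equivIco 1 0 (a i)
  have hf : ∀ i, (f i : S1) = a i := fun i => AddCircle.coe_equivIco
  have hmono : StrictMono (f ∘ Tuple.sort f) := by
    refine (Tuple.monotone_sort f).strictMono_of_injective (.comp ?_ (Tuple.sort f).injective)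
    exact fun i j h => ha (by rw [← hf i, ← hf j, h])
  refine ⟨Tuple.sort f, fun i j l hij hjl => ?_⟩
  have hli : f (Tuple.sort f l) < f (Tuple.sort f i) + 1 := by
    linarith [(AddCircle.equivIco 1 0 (a (Tuple.sort f l))).2.2,
      (AddCircle.equivIco 1 0 (a (Tuple.sort f i))).2.1]
  simpa only [Function.comp_apply, hf] using
    AddCircle.sbtw_coe_of_lt (hmono hij) (hmono hjl) hli

namespace Fin

variable {n : ℕ}

theorem val_add_one_eq_or (x : Fin (n + 1)) :
    (x + 1 : Fin (n + 1)).val = x.val + 1 ∨ (x.val = n ∧ (x + 1 : Fin (n + 1)).val = 0) := by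
  rw [val_add_one]
  split_ifs with h
  · exact .inr ⟨by simp [h], rfl⟩
  · exact .inl rfl

theorem not_sbtw_add_one (x y : Fin (n + 1)) : ¬sbtw x y (x + 1) := by
  rw [sbtw_iff]
  simp only [lt_def]
  have := val_add_one_eq_or x
  omega

theorem sbtw_add_one_of_ne {x y : Fin (n + 1)} (hx : y ≠ x) (hx₁ : y ≠ x + 1) :
    sbtw x (x + 1) y := by
  rw [sbtw_iff]
  simp only [lt_def]
  rw [Ne, Fin.ext_iff] at hx hx₁
  have := val_add_one_eq_or x
  omega

theorem perm_apply_add_one_of_sbtw {π : Equiv.Perm (Fin (n + 1))}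
    (hπ : ∀ i j l, sbtw i j l → sbtw (π i) (π j) (π l)) (i : Fin (n + 1)) :
    π (i + 1) = π i + 1 := by
  rcases n with _ | n
  · exact Subsingleton.elim (α := Fin 1) _ _
  open Fin.CommRing in
  by_contra hne
  set j := π.symm (π i + 1)
  have hj : π j = π i + 1 := π.apply_symm_apply _
  have hji : j ≠ i := fun h => succ_ne_self (π i) (by rw [← hj, h])
  have hji₁ : j ≠ i + 1 := fun h => hne (by rw [← h, hj])
  have h₁ : sbtw (π i) (π j) (π (i + 1)) :=
    hj ▸ sbtw_add_one_of_ne (π.injective.ne (succ_ne_self i)) hne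
  have h₂ : sbtw (i + 1) j i :=
    (sbtw_or_sbtw_of_ne hji.symm hji₁ (succ_ne_self i)).resolve_left (not_sbtw_add_one i j)
  exact sbtw_asymm (hπ _ _ _ h₂) h₁

open Fin.NatCast in
theorem perm_eq_addLeft_of_sbtw {π : Equiv.Perm (Fin (n + 1))}
    (hπ : ∀ i j l, sbtw i j l → sbtw (π i) (π j) (π l)) : π = Equiv.addLeft (π 0) := by
  have h : ∀ v : ℕ, π v = π 0 + v := by
    intro v
    induction v with
    | zero => simp
    | succ v ih => rw [Nat.cast_succ, perm_apply_add_one_of_sbtw hπ, ih, add_assoc]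
  refine Equiv.ext fun i => ?_
  simpa using h i

theorem sign_addLeft_of_even (hn : Even n) (c : Fin (n + 1)) :
    Equiv.Perm.sign (Equiv.addLeft c) = 1 := by
  have hc : Equiv.addLeft c = finRotate (n + 1) ^ c.val := by
    have : finRotate (n + 1) = Equiv.addLeft 1 := by ext i; simp [add_comm]
    open Fin.CommRing in
    rw [this, Equiv.nsmul_addLeft, nsmul_eq_mul, mul_one, cast_val_eq_self]
  rw [hc, map_pow, sign_finRotate, Nat.add_sub_cancel, hn.neg_one_pow, one_pow]

end Fin

namespace InCyclicOrder

variable {m : ℕ} {b : Fin m → S1}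

theorem sbtw_apply (hb : InCyclicOrder b) {i j l : Fin m} (h : sbtw i j l) :
    sbtw (b i) (b j) (b l) := by
  rcases h with ⟨hij, hjl⟩ | ⟨hjl, hli⟩ | ⟨hli, hij⟩
  · exact hb i j l hij hjl
  · exact sbtw_cyclic_right (hb j l i hjl hli)
  · exact sbtw_cyclic_left (hb l i j hli hij)

theorem sbtw_perm_apply (hb : InCyclicOrder b) {π : Equiv.Perm (Fin m)}
    (hbπ : InCyclicOrder (b ∘ π)) {i j l : Fin m} (h : sbtw i j l) :
    sbtw (π i) (π j) (π l) := by
  have h' : sbtw (b (π i)) (b (π j)) (b (π l)) := hbπ.sbtw_apply h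
  refine (sbtw_or_sbtw_of_ne ?_ ?_ ?_).resolve_right fun h'' => sbtw_asymm (hb.sbtw_apply h'') h'
  · intro e; rw [e] at h'; exact sbtw_irrefl_left h'
  · intro e; rw [e] at h'; exact sbtw_irrefl_right h'
  · intro e; rw [e] at h'; exact sbtw_irrefl_left_right h'

theorem sign_eq_one {n : ℕ} (hn : Even n) {b : Fin (n + 1) → S1} (hb : InCyclicOrder b)
    {π : Equiv.Perm (Fin (n + 1))} (hbπ : InCyclicOrder (b ∘ π)) : Equiv.Perm.sign π = 1 := by
  rw [Fin.perm_eq_addLeft_of_sbtw fun _ _ _ => hb.sbtw_perm_apply hbπ]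
  exact Fin.sign_addLeft_of_even hn _

end InCyclicOrder

theorem cycSgn_eq_sign {n : ℕ} (hn : Even n) {a : Fin (n + 1) → S1}
    {σ : Equiv.Perm (Fin (n + 1))} (hσ : InCyclicOrder (a ∘ σ)) : cycSgn a = Equiv.Perm.sign σ := by
  have h : ∃ σ : Equiv.Perm (Fin (n + 1)), InCyclicOrder (a ∘ σ) := ⟨σ, hσ⟩
  have hsign : Equiv.Perm.sign (h.choose⁻¹ * σ) = 1 :=
    h.choose_spec.sign_eq_one hn (by simpa [Function.comp_def] using hσ)
  rw [map_mul, map_inv, inv_mul_eq_one] at hsign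
  rw [cycSgn, dif_pos h, hsign]

theorem stmt2 (k : ℕ) (a : Fin (2 * k + 1) → S1) (ha : Function.Injective a)
    (τ : Equiv.Perm (Fin (2 * k + 1))) :
    cycSgn (a ∘ τ) = (Equiv.Perm.sign τ : ℤ) * cycSgn a := by
  obtain ⟨σ, hσ⟩ := exists_perm_inCyclicOrder ha
  have hτσ : InCyclicOrder ((a ∘ τ) ∘ (τ⁻¹ * σ)) := by simpa [Function.comp_def] using hσ
  rw [cycSgn_eq_sign (even_two_mul k) hτσ, cycSgn_eq_sign (even_two_mul k) hσ, map_mul,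
    Equiv.Perm.sign_inv, Units.val_mul]
end
end

section
/- Let α be a type, n ≥ 1, and let g be a ℚ-valued function on injective (n+1)-tuples Fin (n+1) → α such that for every injective (n+2)-tuple a : Fin (n+2) → α one has Σ_{i=0}^{n+1} (−1)^i g(a ∘ δ_i) = 0. For pairwise disjoint nonempty finite subsets A_0, …, A_n of α define G(A_0,…,A_n) := (Π_i |A_i|)^{-1} · Σ_{(a_0,…,a_n) ∈ A_0×⋯×A_n} g(a_0,…,a_n). Then for all pairwise disjoint nonempty finite subsets A_0, …, A_{n+1} of α, Σ_{i=0}^{n+1} (−1)^i G(A_0, …, Â_i, …, A_{n+1}) = 0 (where Â_i means A_i is omitted). -/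
noncomputable section
open Classical

/-- The alternating-sum (cocycle) identity for averaged cochains: if `g` is a
`ℚ`-valued simplicial `n`-cocycle on injective tuples in `α`, then its average `G`
over products of pairwise disjoint nonempty finite sets is again a cocycle. -/
theorem stmt4 (α : Type*) (n : ℕ) (hn : 1 ≤ n)
    (g : (Fin (n + 1) → α) → ℚ)
    (hg : ∀ a : Fin (n + 2) → α, Function.Injective a →
      ∑ i : Fin (n + 2), (-1 : ℚ) ^ (i : ℕ) * g (a ∘ i.succAbove) = 0)
    (A : Fin (n + 2) → Finset α)
    (hne : ∀ i, (A i).Nonempty)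
    (hdisj : ∀ i j, i ≠ j → Disjoint (A i) (A j)) :
    ∑ i : Fin (n + 2), (-1 : ℚ) ^ (i : ℕ) *
      ((∏ j : Fin (n + 1), ((A (i.succAbove j)).card : ℚ))⁻¹ *
        ∑ a ∈ Fintype.piFinset (fun j : Fin (n + 1) => A (i.succAbove j)), g a) = 0 := by
  have hcard : ∀ j, ((A j).card : ℚ) ≠ 0 := fun j => by
    exact_mod_cast (Finset.card_pos.mpr (hne j)).ne'
  set C : ℚ := (∏ j : Fin (n + 2), ((A j).card : ℚ))⁻¹ with hC
  have key : ∀ i : Fin (n + 2),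
      (∏ j : Fin (n + 1), ((A (i.succAbove j)).card : ℚ))⁻¹ *
        ∑ a ∈ Fintype.piFinset (fun j : Fin (n + 1) => A (i.succAbove j)), g a
      = C * ∑ a ∈ Fintype.piFinset A, g (a ∘ i.succAbove) := by
    intro i
    have hsum : ∑ a ∈ Fintype.piFinset A, g (a ∘ i.succAbove)
        = ((A i).card : ℚ) *
          ∑ b ∈ Fintype.piFinset (fun j : Fin (n + 1) => A (i.succAbove j)), g b := by
      have : ∑ a ∈ Fintype.piFinset A, g (a ∘ i.succAbove)
          = ∑ p ∈ (A i) ×ˢ Fintype.piFinset (fun j : Fin (n + 1) => A (i.succAbove j)),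
              g p.2 := by
        apply Finset.sum_nbij' (i := fun a => (a i, a ∘ i.succAbove))
          (j := fun p => i.insertNth p.1 p.2)
        · intro a ha
          simp only [Finset.mem_product, Fintype.mem_piFinset] at ha ⊢
          exact ⟨ha i, fun j => ha _⟩
        · intro p hp
          simp only [Finset.mem_product, Fintype.mem_piFinset] at hp ⊢
          intro j
          by_cases hj : j = i
          · subst hj; simpa using hp.1
          · obtain ⟨k, rfl⟩ := Fin.exists_succAbove_eq hj
            simpa using hp.2 k
        · intro a ha
          exact Fin.insertNth_self_removeNth i a
        · intro p hp
          simp [Prod.ext_iff, funext_iff, Fin.insertNth_apply_same,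
            Fin.insertNth_apply_succAbove]
        · intro a ha; rfl
      rw [this, Finset.sum_product]
      simp [Finset.sum_const, mul_comm]
    have hprod : (∏ j : Fin (n + 2), ((A j).card : ℚ))
        = ((A i).card : ℚ) * ∏ j : Fin (n + 1), ((A (i.succAbove j)).card : ℚ) :=
      Fin.prod_univ_succAbove (fun j => ((A j).card : ℚ)) i
    rw [hsum, hC, hprod, mul_inv]
    have h1 : (∏ j : Fin (n + 1), ((A (i.succAbove j)).card : ℚ)) ≠ 0 :=
      Finset.prod_ne_zero_iff.mpr fun j _ => hcard _
    field_simp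
  calc ∑ i : Fin (n + 2), (-1 : ℚ) ^ (i : ℕ) *
      ((∏ j : Fin (n + 1), ((A (i.succAbove j)).card : ℚ))⁻¹ *
        ∑ a ∈ Fintype.piFinset (fun j : Fin (n + 1) => A (i.succAbove j)), g a)
      = ∑ i : Fin (n + 2), ∑ a ∈ Fintype.piFinset A,
          C * ((-1 : ℚ) ^ (i : ℕ) * g (a ∘ i.succAbove)) := by
        refine Finset.sum_congr rfl fun i _ => ?_
        rw [key i, Finset.mul_sum, Finset.mul_sum]
        refine Finset.sum_congr rfl fun a _ => ?_
        ring
    _ = ∑ a ∈ Fintype.piFinset A,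
          C * ∑ i : Fin (n + 2), (-1 : ℚ) ^ (i : ℕ) * g (a ∘ i.succAbove) := by
        rw [Finset.sum_comm]
        exact Finset.sum_congr rfl fun a _ => (Finset.mul_sum _ _ _).symm
    _ = 0 := by
        refine Finset.sum_eq_zero fun a ha => ?_
        have hinj : Function.Injective a := by
          intro j k h
          by_contra hjk
          simp only [Fintype.mem_piFinset] at ha
          exact Finset.disjoint_left.mp (hdisj j k hjk) (ha j) (h ▸ ha k)
        rw [hg a hinj, mul_zero]
end
end

section
/- Let n, m be positive integers and let f, f' : ℤ → ℤ be strictly increasing maps satisfying f(x+n) = f(x)+m and f'(x+n) = f'(x)+m for all x ∈ ℤ. If f(x) ≡ f'(x) (mod m) for all x ∈ ℤ, then there exists k ∈ ℤ such that f(x) = f'(x) + k·m for all x ∈ ℤ. -/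
/-!
The difference `f - f'` is `n`-periodic, so it suffices to compare it on a residue `r ∈ [0, n)`
with its value at `0`. Strict monotonicity and `f (x + n) = f x + m` squeeze both `f r - f 0` and
`f' r - f' 0` into `[0, m)`; being congruent modulo `m`, they are equal.
-/

open Set Function

theorem Int.eq_of_dvd_sub_of_mem_Ico {a b m : ℤ} (ha : a ∈ Ico 0 m) (hb : b ∈ Ico 0 m)
    (h : m ∣ a - b) : a = b :=
  sub_eq_zero.mp (Int.eq_zero_of_abs_lt_dvd h (abs_sub_lt_of_nonneg_of_lt ha.1 ha.2 hb.1 hb.2))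

theorem periodic_sub_of_map_add_eq_add {α β : Type*} [AddGroup α] [AddCommGroup β]
    {f g : α → β} {c : α} {d : β} (hf : ∀ x, f (x + c) = f x + d) (hg : ∀ x, g (x + c) = g x + d) :
    Periodic (f - g) c := fun x => by
  simp only [Pi.sub_apply, hf, hg, add_sub_add_right_eq_sub]

section

variable {n m : ℤ} {f f' : ℤ → ℤ}

theorem StrictMono.sub_apply_zero_mem_Ico (hf : StrictMono f) (hfn : ∀ x, f (x + n) = f x + m)
    {r : ℤ} (hr : r ∈ Ico 0 n) : f r - f 0 ∈ Ico 0 m := by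
  have hlo : f 0 ≤ f r := hf.monotone hr.1
  have hhi : f r < f (0 + n) := hf (by rw [zero_add]; exact hr.2)
  rw [hfn] at hhi
  constructor <;> omega

theorem StrictMono.sub_eq_sub_apply_zero_of_dvd (hn : 0 < n) (hf : StrictMono f)
    (hf' : StrictMono f') (hfn : ∀ x, f (x + n) = f x + m) (hf'n : ∀ x, f' (x + n) = f' x + m)
    (hcong : ∀ x, m ∣ f x - f' x) (x : ℤ) : f x - f' x = f 0 - f' 0 := by
  set r := x % n
  have hr : r ∈ Ico 0 n := ⟨Int.emod_nonneg x hn.ne', Int.emod_lt_of_pos x hn⟩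
  have hres : f r - f 0 = f' r - f' 0 :=
    Int.eq_of_dvd_sub_of_mem_Ico (hf.sub_apply_zero_mem_Ico hfn hr)
      (hf'.sub_apply_zero_mem_Ico hf'n hr)
      (by rw [sub_sub_sub_comm]; exact dvd_sub (hcong r) (hcong 0))
  calc f x - f' x = (f - f') (r + (x / n) • n) := by
        rw [smul_eq_mul, Int.emod_add_ediv_mul]; rfl
    _ = (f - f') r := (periodic_sub_of_map_add_eq_add hfn hf'n).zsmul _ r
    _ = f 0 - f' 0 := by rw [Pi.sub_apply]; omega

end

theorem stmt11_general (n m : ℕ) (hn : 0 < n) (f f' : ℤ → ℤ)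
    (hf : StrictMono f) (hf' : StrictMono f')
    (hfn : ∀ x : ℤ, f (x + n) = f x + m) (hf'n : ∀ x : ℤ, f' (x + n) = f' x + m)
    (hcong : ∀ x : ℤ, (m : ℤ) ∣ (f x - f' x)) :
    ∃ k : ℤ, ∀ x : ℤ, f x = f' x + k * m := by
  obtain ⟨k, hk⟩ := hcong 0
  refine ⟨k, fun x => ?_⟩
  have := hf.sub_eq_sub_apply_zero_of_dvd (by exact_mod_cast hn) hf' hfn hf'n hcong x
  linarith

/-- A strictly increasing morphism of Connes' cyclic category `Λ` is determined, up to
the equivalence `f ∼ f + k·m`, by the induced map on residues modulo `m`. -/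
theorem stmt11 (n m : ℕ) (hn : 0 < n) (hm : 0 < m) (f f' : ℤ → ℤ)
    (hf : StrictMono f) (hf' : StrictMono f')
    (hfn : ∀ x : ℤ, f (x + n) = f x + m) (hf'n : ∀ x : ℤ, f' (x + n) = f' x + m)
    (hcong : ∀ x : ℤ, (m : ℤ) ∣ (f x - f' x)) :
    ∃ k : ℤ, ∀ x : ℤ, f x = f' x + k * m :=
  stmt11_general n m hn f f' hf hf' hfn hf'n hcong
end
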